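/- arXiv:1803.06261 — 3 statements merged into one kernel-verified Lean document; each statement's English description precedes it below -/
import Mathlib

section
/- Let p≥2 be an integer and 1≤j≤p−1. Then for all τ∈ℍ one has F*_{j,p}(τ) = −i√(2p)·I_{f_{j,p}}(τ). -/
/-
Along the vertical path `w = -τ̄ + it` one has `-i(w + τ) = 2v + t > 0` (`v = Im τ`), so the
kernel of `I_f` is the real function `(2v + t)^(-1/2)`, and each term `e^{ibw}` of the theta
series (with `b = πn²/(2p)`) integrates to an incomplete gamma value: shifting and rescaling give
`∫₀^∞ e^{-bt} (2v + t)^(-1/2) dt = e^{2bv} b^(-1/2) Γ(1/2, 2bv)`,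
and `e^{-ibτ̄} e^{2bv} = e^{-ibτ}`.
The bound `∫₀^∞ e^{-bt} (2v + t)^(-1/2) dt ≤ (2v)^(-1/2)/b` dominates the series by a theta
series, which justifies integrating term by term. The constants match because
`√(2p) · n/(2p) · b^(-1/2) = sgn(n)/√π`.
-/
noncomputable section

open Complex MeasureTheory Real Filter Topology

namespace QMF

/-- Principal-branch kernel `(-i(w+τ))^e`. -/
def ker (w τ e : ℂ) : ℂ := (-I * (w + τ)) ^ e

/-- `∫_a^{i∞} f(w)·(-i(w+τ))^e dw` along the vertical path `w = a + it`, `t ∈ (0,∞)`. -/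
def lineInt (f : ℂ → ℂ) (e a τ : ℂ) : ℂ :=
  ∫ t in Set.Ioi (0 : ℝ), f (a + I * t) * ker (a + I * t) τ e * I

/-- Non-holomorphic Eichler integral `∫_{-τ̄}^{i∞} f(w)·(-i(w+τ))^e dw`. -/
def EichI (f : ℂ → ℂ) (e τ : ℂ) : ℂ := lineInt f e (-(starRingEnd ℂ τ)) τ

/-- Theta integral `r_f(τ) = ∫_0^{i∞} f(w)·(-i(w+τ))^e dw`. -/
def rInt (f : ℂ → ℂ) (e τ : ℂ) : ℂ := lineInt f e 0 τ

/-- Double iterated integral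
`∫_a^{i∞}∫_{w₁}^{i∞} F(w₁,w₂)·(-i(w₁+τ))^{e₁}·(-i(w₂+τ))^{e₂} dw₂ dw₁`
along vertical paths `w₁ = a + it₁`, `w₂ = w₁ + it₂`. -/
def dblInt (F : ℂ → ℂ → ℂ) (e₁ e₂ a τ : ℂ) : ℂ :=
  ∫ t₁ in Set.Ioi (0 : ℝ), ∫ t₂ in Set.Ioi (0 : ℝ),
    F (a + I * t₁) (a + I * t₁ + I * t₂) *
      ker (a + I * t₁) τ e₁ * ker (a + I * t₁ + I * t₂) τ e₂ * (I * I)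

/-- Double Eichler integral `∫_{-τ̄}^{i∞}∫_{w₁}^{i∞}`. -/
def dblEich (F : ℂ → ℂ → ℂ) (e₁ e₂ τ : ℂ) : ℂ := dblInt F e₁ e₂ (-(starRingEnd ℂ τ)) τ

/-- Double theta integral `∫_0^{i∞}∫_{w₁}^{i∞}`. -/
def dblR (F : ℂ → ℂ → ℂ) (e₁ e₂ τ : ℂ) : ℂ := dblInt F e₁ e₂ 0 τ

/-- The weight-3/2 unary theta function `f_{j,p}`. -/
def fjp (p j : ℕ) (τ : ℂ) : ℂ :=
  (1 / (2 * (p : ℂ))) * ∑' n : ℤ,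
    if n % (2 * (p : ℤ)) = (j : ℤ) % (2 * (p : ℤ)) then
      (n : ℂ) * Complex.exp (2 * (π : ℂ) * I * τ * (n : ℂ) ^ 2 / (4 * (p : ℂ)))
    else 0

/-- Upper incomplete gamma function `Γ(s,x) = ∫_x^∞ e^{-t} t^{s-1} dt`. -/
def incGamma (s x : ℝ) : ℝ := ∫ t in Set.Ioi x, Real.exp (-t) * t ^ (s - 1)

/-- The non-holomorphic Eichler integral companion `F^*_{j,p}`. -/
def Fstar (p j : ℕ) (τ : ℂ) : ℂ :=
  (1 / ((Real.sqrt π : ℝ) : ℂ)) * ∑' n : ℤ,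
    if n % (2 * (p : ℤ)) = (j : ℤ) % (2 * (p : ℤ)) then
      (n.sign : ℂ) * ((incGamma (1/2) (π * (n : ℝ) ^ 2 * τ.im / p) : ℝ) : ℂ) *
        Complex.exp (-(2 * (π : ℂ) * I * τ * (n : ℂ) ^ 2 / (4 * (p : ℂ))))
    else 0

/-- Shimura's theta function `Θ_ν(A,h,N;τ)`. -/
def ShTheta (ν A : ℕ) (h : ℤ) (N : ℕ) (τ : ℂ) : ℂ :=
  ∑' m : ℤ, if m % (N : ℤ) = h % (N : ℤ) then
    (m : ℂ) ^ ν * Complex.exp ((π : ℂ) * I * τ * (A : ℂ) * (m : ℂ) ^ 2 / (N : ℂ) ^ 2)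
  else 0

/-- `ζ_n^e = e^{2πie/n}`. -/
def zeta (n : ℕ) (e : ℤ) : ℂ := Complex.exp (2 * (π : ℂ) * I * (e : ℂ) / (n : ℂ))

/-- Component `α + m` of a shifted lattice point, as a complex number. -/
def nv (a : ℝ) (m : ℤ) : ℂ := ((a + (m : ℝ) : ℝ) : ℂ)

/-- `θ₁(α;w)`. -/
def theta1 (α : ℝ × ℝ) (w₁ w₂ : ℂ) : ℂ :=
  ∑' m : ℤ × ℤ,
    (2 * nv α.1 m.1 + nv α.2 m.2) * nv α.2 m.2 *
      Complex.exp (3 * (π : ℂ) * I / 2 * (2 * nv α.1 m.1 + nv α.2 m.2) ^ 2 * w₁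
        + (π : ℂ) * I / 2 * (nv α.2 m.2) ^ 2 * w₂)

/-- `θ₂(α;w)`. -/
def theta2 (α : ℝ × ℝ) (w₁ w₂ : ℂ) : ℂ :=
  ∑' m : ℤ × ℤ,
    (3 * nv α.1 m.1 + 2 * nv α.2 m.2) * nv α.1 m.1 *
      Complex.exp ((π : ℂ) * I / 2 * (3 * nv α.1 m.1 + 2 * nv α.2 m.2) ^ 2 * w₁
        + 3 * (π : ℂ) * I / 2 * (nv α.1 m.1) ^ 2 * w₂)

/-- `θ₃(α;w)`. -/
def theta3 (α : ℝ × ℝ) (w₁ w₂ : ℂ) : ℂ :=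
  ∑' m : ℤ × ℤ,
    (2 * nv α.1 m.1 + nv α.2 m.2) *
      Complex.exp (3 * (π : ℂ) * I / 2 * (2 * nv α.1 m.1 + nv α.2 m.2) ^ 2 * w₁
        + (π : ℂ) * I / 2 * (nv α.2 m.2) ^ 2 * w₂)

/-- `θ₄(α;w)`. -/
def theta4 (α : ℝ × ℝ) (w₁ w₂ : ℂ) : ℂ :=
  ∑' m : ℤ × ℤ,
    (3 * nv α.1 m.1 + 2 * nv α.2 m.2) *
      Complex.exp ((π : ℂ) * I / 2 * (3 * nv α.1 m.1 + 2 * nv α.2 m.2) ^ 2 * w₁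
        + 3 * (π : ℂ) * I / 2 * (nv α.1 m.1) ^ 2 * w₂)

/-- `θ₅(α;w)`. -/
def theta5 (α : ℝ × ℝ) (w₁ w₂ : ℂ) : ℂ :=
  ∑' m : ℤ × ℤ,
    nv α.1 m.1 *
      Complex.exp ((π : ℂ) * I / 2 * (3 * nv α.1 m.1 + 2 * nv α.2 m.2) ^ 2 * w₁
        + 3 * (π : ℂ) * I / 2 * (nv α.1 m.1) ^ 2 * w₂)

/-- `𝓔_{1,α}(τ)`. -/
def E1a (α : ℝ × ℝ) (τ : ℂ) : ℂ :=
  -((Real.sqrt 3 : ℂ) / 4) *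
    dblEich (fun w₁ w₂ => theta1 α w₁ w₂ + theta2 α w₁ w₂) (-(1/2)) (-(1/2)) τ

/-- `𝓔₁(τ) = Σ_{α ∈ 𝒮*} ε(α)·𝓔_{1,α}(pτ)`. -/
def E1 (p : ℕ) (τ : ℂ) : ℂ :=
  (-2) * E1a (1 - 1/(p:ℝ), 2/(p:ℝ)) ((p:ℂ) * τ)
    + E1a (0, 1 - 1/(p:ℝ)) ((p:ℂ) * τ) + E1a (1/(p:ℝ), 1 - 1/(p:ℝ)) ((p:ℂ) * τ)

/-- `H_{1,α}(τ)`. -/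
def H1 (α : ℝ × ℝ) (τ : ℂ) : ℂ :=
  -(Real.sqrt 3 : ℂ) *
    dblR (fun w₁ w₂ => theta1 α w₁ w₂ + theta2 α w₁ w₂) (-(1/2)) (-(1/2)) τ

/-- `𝓔_{2,α}(τ)`. -/
def E2a (α : ℝ × ℝ) (τ : ℂ) : ℂ :=
  (Real.sqrt 3 : ℂ) / (8 * (π : ℂ)) *
      dblEich (fun w₁ w₂ => 2 * theta3 α w₁ w₂ - theta4 α w₁ w₂) (-(1/2)) (-(3/2)) τ
    + (Real.sqrt 3 : ℂ) / (8 * (π : ℂ)) *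
      dblEich (fun w₁ w₂ => theta5 α w₁ w₂) (-(3/2)) (-(1/2)) τ

/-- `𝓔₂(τ) = Σ_{α ∈ 𝒮*} 𝓔_{2,α}(pτ)`. -/
def E2 (p : ℕ) (τ : ℂ) : ℂ :=
  E2a (1 - 1/(p:ℝ), 2/(p:ℝ)) ((p:ℂ) * τ)
    + E2a (0, 1 - 1/(p:ℝ)) ((p:ℂ) * τ) + E2a (1/(p:ℝ), 1 - 1/(p:ℝ)) ((p:ℂ) * τ)

/-- `H_{2,α}(τ)`. -/
def H2 (α : ℝ × ℝ) (τ : ℂ) : ℂ :=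
  (Real.sqrt 3 : ℂ) * I / (2 * (π : ℂ)) *
      dblR (fun w₁ w₂ => 2 * theta3 α w₁ w₂ - theta4 α w₁ w₂) (-(1/2)) (-(3/2)) τ
    + (Real.sqrt 3 : ℂ) * I / (2 * (π : ℂ)) *
      dblR (fun w₁ w₂ => theta5 α w₁ w₂) (-(3/2)) (-(1/2)) τ

/-- `I_𝐤(τ)`. -/
def Ik (p : ℕ) (k : ℤ × ℤ) (τ : ℂ) : ℂ :=
  -((Real.sqrt 3 : ℂ) / (4 * (p : ℂ))) *
    dblEich (fun w₁ w₂ => ShTheta 1 (2*p) k.1 (2*p) w₁ * ShTheta 1 (6*p) k.2 (6*p) w₂)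
      (-(1/2)) (-(1/2)) τ

/-- `J_𝐤(τ) = Σ_{δ∈{0,1}} I_{(k₁+δp, k₂+3δp)}(τ)`. -/
def Jk (p : ℕ) (k : ℤ × ℤ) (τ : ℂ) : ℂ :=
  ∑ δ ∈ Finset.range 2, Ik p (k.1 + (δ:ℤ) * p, k.2 + 3 * (δ:ℤ) * p) τ

/-- `r_𝐤(τ)`. -/
def rk (p : ℕ) (k : ℤ × ℤ) (τ : ℂ) : ℂ :=
  dblR (fun w₁ w₂ => ShTheta 1 (2*p) k.1 (2*p) w₁ * ShTheta 1 (6*p) k.2 (6*p) w₂)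
    (-(1/2)) (-(1/2)) τ

/-- `𝓘_𝐤(τ)`. -/
def cI (p : ℕ) (k : ℤ × ℤ) (τ : ℂ) : ℂ :=
  -((Real.sqrt 3 : ℂ) / (8 * (π : ℂ))) *
    dblEich (fun w₁ w₂ => ShTheta 1 (2*p) k.1 (2*p) w₁ * ShTheta 0 (6*p) k.2 (6*p) w₂)
      (-(1/2)) (-(3/2)) τ

/-- `𝓙_𝐤(τ) = Σ_{δ∈{0,1}} 𝓘_{(k₁+pδ, k₂+3pδ)}(τ)`. -/
def cJ (p : ℕ) (k : ℤ × ℤ) (τ : ℂ) : ℂ :=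
  ∑ δ ∈ Finset.range 2, cI p (k.1 + (δ:ℤ) * p, k.2 + 3 * (δ:ℤ) * p) τ

/-- `𝓚_𝐤(τ) = 2𝓙_𝐤(τ) + 𝓙_{((k₁+k₂)/2, (k₂-3k₁)/2)}(τ)`. -/
def cK (p : ℕ) (k : ℤ × ℤ) (τ : ℂ) : ℂ :=
  2 * cJ p k τ + cJ p ((k.1 + k.2)/2, (k.2 - 3*k.1)/2) τ

/-- `R_𝐤(τ)`. -/
def Rk (p : ℕ) (k : ℤ × ℤ) (τ : ℂ) : ℂ :=
  dblR (fun w₁ w₂ => ShTheta 1 (2*p) k.1 (2*p) w₁ * ShTheta 0 (6*p) k.2 (6*p) w₂)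
    (-(1/2)) (-(3/2)) τ

/-- `𝓕_α(x)`. -/
def Fcal (α x : ℝ) : ℝ := Real.sinh (2*π*x) / (Real.cosh (2*π*x) - Real.cos (2*π*α))

/-- `𝒢_α(x)`. -/
def Gcal (α x : ℝ) : ℝ := Real.sin (2*π*α) / (Real.cosh (2*π*x) - Real.cos (2*π*α))

/-- `𝒢*_α(x) = x·𝒢_α(x)`. -/
def Gstar (α x : ℝ) : ℝ := x * Gcal α x

/-- `a` is an integer. -/
def isInt (a : ℝ) : Prop := ∃ n : ℤ, a = (n : ℝ)

open Classical in
/-- The function `g_{1,α}`. -/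
def g1 (α w : ℝ × ℝ) : ℝ :=
  if isInt α.1 then
    -2 * Fcal 0 w.1 * Fcal α.2 w.2 + 2/(π * w.1) * Fcal α.2 (w.2 + 3*w.1/2)
  else if isInt α.2 then
    -2 * Fcal α.1 w.1 * Fcal 0 w.2 + 2/(π * w.2) * Fcal α.1 (w.1 + w.2/2)
  else
    2 * Gcal α.1 w.1 * Gcal α.2 w.2 - 2 * Fcal α.1 w.1 * Fcal α.2 w.2

open Classical in
/-- The function `g_{2,α}`. -/
def g2 (α w : ℝ × ℝ) : ℂ :=
  if isInt α.1 then
    -2 * I * ((Fcal 0 w.1 * Gstar α.2 w.2 - 1/(π*w.1) * Gstar α.2 (w.2 + 3*w.1/2) : ℝ) : ℂ)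
  else
    -2 * I * ((w.2 : ℝ) : ℂ) *
      ((Gcal α.1 w.1 * Fcal α.2 w.2 + Fcal α.1 w.1 * Gcal α.2 w.2 : ℝ) : ℂ)

/-- The quadratic form `Q(w) = 3w₁² + w₂² + 3w₁w₂`. -/
def Qf (w : ℝ × ℝ) : ℝ := 3*w.1^2 + w.2^2 + 3*w.1*w.2

/-- The function `M₂(κ; u₁, u₂)`, defined by a double contour integral over
horizontal lines `ℝ - iu₂` (outer) and `ℝ - iu₁` (inner). -/
def M2 (κ u₁ u₂ : ℝ) : ℂ :=
  -(1/(π:ℂ)^2) * ∫ t₂ : ℝ, ∫ t₁ : ℝ,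
    Complex.exp (-(π:ℂ) * ((t₁:ℂ) - I*(u₁:ℂ))^2 - (π:ℂ) * ((t₂:ℂ) - I*(u₂:ℂ))^2
        - 2*(π:ℂ)*I*((u₁:ℂ)*((t₁:ℂ) - I*(u₁:ℂ)) + (u₂:ℂ)*((t₂:ℂ) - I*(u₂:ℂ)))) /
      (((t₂:ℂ) - I*(u₂:ℂ)) * (((t₁:ℂ) - I*(u₁:ℂ)) - (κ:ℂ)*((t₂:ℂ) - I*(u₂:ℂ))))

lemma setIntegral_Ioi_comp_add_right {E : Type*} [NormedAddCommGroup E] [NormedSpace ℝ E]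
    (g : ℝ → E) (c : ℝ) :
    ∫ t in Set.Ioi 0, g (t + c) = ∫ t in Set.Ioi c, g t := by
  simpa using (measurePreserving_add_right volume c).setIntegral_preimage_emb
    (MeasurableEquiv.addRight c).measurableEmbedding g (Set.Ioi c)

lemma setIntegral_Ioi_exp_neg_mul_rpow_add {b c : ℝ} (hb : 0 < b) (hc : 0 ≤ c) (s : ℝ) :
    ∫ t in Set.Ioi 0, Real.exp (-b * t) * (c + t) ^ (s - 1)
      = Real.exp (b * c) * b ^ (-s) * incGamma s (b * c) := by
  have hexp : Real.exp (b * c) * Real.exp (-(b * c)) = 1 := by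
    rw [← Real.exp_add, add_neg_cancel, Real.exp_zero]
  have hpow : b ^ (1 - s) * b ^ (s - 1) = 1 := by
    rw [← Real.rpow_add hb]; simp
  have hpt : ∀ t ∈ Set.Ioi (0 : ℝ), Real.exp (-b * t) * (c + t) ^ (s - 1)
      = Real.exp (b * c) * b ^ (1 - s) *
        (Real.exp (-(b * (t + c))) * (b * (t + c)) ^ (s - 1)) := by
    intro t (ht : 0 < t)
    rw [Real.mul_rpow hb.le (by linarith), show -(b * (t + c)) = -(b * c) + -b * t by ring,
      Real.exp_add, add_comm t c]
    linear_combination (-(Real.exp (-b * t) * (c + t) ^ (s - 1))) *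
      (b ^ (1 - s) * b ^ (s - 1) * hexp + hpow)
  have hscale : b ^ (1 - s) * b⁻¹ = b ^ (-s) := by
    rw [← Real.rpow_neg_one, ← Real.rpow_add hb]
    congr 1
    ring
  rw [setIntegral_congr_fun measurableSet_Ioi hpt, integral_const_mul,
    setIntegral_Ioi_comp_add_right (fun t => Real.exp (-(b * t)) * (b * t) ^ (s - 1)),
    integral_comp_mul_left_Ioi (fun u => Real.exp (-u) * u ^ (s - 1)) c hb, smul_eq_mul,
    ← hscale, incGamma]
  ring

lemma integrableOn_exp_neg_mul_rpow_add {b c r : ℝ} (hb : 0 < b) (hc : 0 < c) (hr : r ≤ 0) :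
    IntegrableOn (fun t => Real.exp (-b * t) * (c + t) ^ r) (Set.Ioi 0) := by
  refine Integrable.mono' ((exp_neg_integrableOn_Ioi 0 hb).const_mul (c ^ r)) ?_ ?_
  · refine ContinuousOn.aestronglyMeasurable ?_ measurableSet_Ioi
    refine (by fun_prop : Continuous fun t => Real.exp (-b * t)).continuousOn.mul ?_
    exact ContinuousOn.rpow_const (by fun_prop) fun t (ht : 0 < t) => Or.inl (by linarith)
  · filter_upwards [self_mem_ae_restrict measurableSet_Ioi] with t (ht : 0 < t)
    rw [Real.norm_of_nonneg (by positivity), mul_comm (c ^ r)]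
    exact mul_le_mul_of_nonneg_left
      (Real.rpow_le_rpow_of_nonpos hc (by linarith) hr) (Real.exp_pos _).le

lemma setIntegral_Ioi_exp_neg_mul_rpow_add_le {b c r : ℝ} (hb : 0 < b) (hc : 0 < c)
    (hr : r ≤ 0) :
    ∫ t in Set.Ioi 0, Real.exp (-b * t) * (c + t) ^ r ≤ c ^ r / b := by
  calc ∫ t in Set.Ioi 0, Real.exp (-b * t) * (c + t) ^ r
      ≤ ∫ t in Set.Ioi 0, c ^ r * Real.exp (-b * t) := by
        refine setIntegral_mono_on (integrableOn_exp_neg_mul_rpow_add hb hc hr)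
          ((exp_neg_integrableOn_Ioi 0 hb).const_mul _) measurableSet_Ioi
          fun t (ht : 0 < t) => ?_
        rw [mul_comm (c ^ r)]
        exact mul_le_mul_of_nonneg_left
          (Real.rpow_le_rpow_of_nonpos hc (by linarith) hr) (Real.exp_pos _).le
    _ = c ^ r / b := by
        rw [integral_const_mul, integral_exp_mul_Ioi (by linarith) 0]
        field_simp
        simp

def eichlerPath (τ : ℂ) (t : ℝ) : ℂ := -(starRingEnd ℂ τ) + I * t

lemma EichI_eq_setIntegral (f : ℂ → ℂ) (e τ : ℂ) :
    EichI f e τ = ∫ t in Set.Ioi 0, f (eichlerPath τ t) * ker (eichlerPath τ t) τ e * I :=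
  rfl

section EichlerPath

variable {τ : ℂ}

lemma neg_I_mul_eichlerPath_add (τ : ℂ) (t : ℝ) :
    -I * (eichlerPath τ t + τ) = ((2 * τ.im + t : ℝ) : ℂ) := by
  have h := Complex.sub_conj τ
  simp only [eichlerPath]
  push_cast at h ⊢
  linear_combination (-I) * h - (2 * (τ.im : ℂ) + t) * I_sq

lemma ker_eichlerPath (hτ : 0 < τ.im) {t : ℝ} (ht : 0 ≤ t) (r : ℝ) :
    ker (eichlerPath τ t) τ r = (((2 * τ.im + t) ^ r : ℝ) : ℂ) := by
  rw [ker, neg_I_mul_eichlerPath_add, ofReal_cpow (by linarith)]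

lemma cexp_I_mul_eichlerPath (b : ℝ) (τ : ℂ) (t : ℝ) :
    cexp (I * b * eichlerPath τ t)
      = cexp (-(I * b * starRingEnd ℂ τ)) * (Real.exp (-b * t) : ℂ) := by
  rw [ofReal_exp, ← Complex.exp_add, eichlerPath]
  congr 1
  push_cast
  linear_combination (b * (t : ℂ)) * I_sq

lemma norm_cexp_neg_I_mul_conj (b : ℝ) (τ : ℂ) :
    ‖cexp (-(I * b * starRingEnd ℂ τ))‖ = Real.exp (-b * τ.im) := by
  rw [Complex.norm_exp]
  simp [Complex.mul_re, Complex.mul_im]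

lemma cexp_neg_I_mul_conj_mul_exp (b : ℝ) (τ : ℂ) :
    cexp (-(I * b * starRingEnd ℂ τ)) * (Real.exp (b * (2 * τ.im)) : ℂ)
      = cexp (-(I * b * τ)) := by
  have h := Complex.sub_conj τ
  rw [ofReal_exp, ← Complex.exp_add]
  congr 1
  push_cast at h ⊢
  linear_combination (I * b) * h + (2 * b * τ.im : ℂ) * I_sq

lemma cexp_mul_ker_eichlerPath (hτ : 0 < τ.im) {t : ℝ} (ht : 0 ≤ t) (b r : ℝ) :
    cexp (I * b * eichlerPath τ t) * ker (eichlerPath τ t) τ r * I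
      = I * cexp (-(I * b * starRingEnd ℂ τ)) *
        ((Real.exp (-b * t) * (2 * τ.im + t) ^ r : ℝ) : ℂ) := by
  rw [cexp_I_mul_eichlerPath, ker_eichlerPath hτ ht]
  push_cast
  ring

lemma integrableOn_cexp_mul_ker_eichlerPath {b r : ℝ} (hb : 0 < b) (hτ : 0 < τ.im)
    (hr : r ≤ 0) :
    IntegrableOn (fun t : ℝ => cexp (I * b * eichlerPath τ t) * ker (eichlerPath τ t) τ r * I)
      (Set.Ioi 0) :=
  IntegrableOn.congr_fun
    ((integrableOn_exp_neg_mul_rpow_add hb (by linarith : 0 < 2 * τ.im) hr).ofReal.const_mul _)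
    (fun t (ht : 0 < t) => (cexp_mul_ker_eichlerPath hτ ht.le b r).symm) measurableSet_Ioi

lemma setIntegral_norm_cexp_mul_ker_eichlerPath_le {b r : ℝ} (hb : 0 < b) (hτ : 0 < τ.im)
    (hr : r ≤ 0) :
    ∫ t in Set.Ioi 0, ‖cexp (I * b * eichlerPath τ t) * ker (eichlerPath τ t) τ r * I‖
      ≤ Real.exp (-b * τ.im) * (2 * τ.im) ^ r / b := by
  have hnorm : ∀ t ∈ Set.Ioi (0 : ℝ),
      ‖cexp (I * b * eichlerPath τ t) * ker (eichlerPath τ t) τ r * I‖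
        = Real.exp (-b * τ.im) * (Real.exp (-b * t) * (2 * τ.im + t) ^ r) := by
    intro t (ht : 0 < t)
    rw [cexp_mul_ker_eichlerPath hτ ht.le, norm_mul, norm_mul, norm_I, one_mul,
      norm_cexp_neg_I_mul_conj, norm_real, Real.norm_of_nonneg (by positivity)]
  rw [setIntegral_congr_fun measurableSet_Ioi hnorm, integral_const_mul, mul_div_assoc]
  exact mul_le_mul_of_nonneg_left
    (setIntegral_Ioi_exp_neg_mul_rpow_add_le hb (by linarith) hr) (Real.exp_pos _).le

theorem EichI_cexp {b : ℝ} (hb : 0 < b) (hτ : 0 < τ.im) (s : ℝ) :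
    EichI (fun w => cexp (I * b * w)) ((s - 1 : ℝ) : ℂ) τ
      = I * ((b ^ (-s) * incGamma s (2 * b * τ.im) : ℝ) : ℂ) * cexp (-(I * b * τ)) := by
  rw [show 2 * b * τ.im = b * (2 * τ.im) by ring, EichI_eq_setIntegral,
    setIntegral_congr_fun measurableSet_Ioi
    fun t (ht : 0 < t) => cexp_mul_ker_eichlerPath hτ ht.le b (s - 1), integral_const_mul,
    integral_complex_ofReal, setIntegral_Ioi_exp_neg_mul_rpow_add hb (by linarith) s,
    ← cexp_neg_I_mul_conj_mul_exp b τ]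
  push_cast
  ring

theorem EichI_tsum_mul_cexp {ι : Type*} [Countable ι] {a : ι → ℂ} {b : ι → ℝ}
    (hb : ∀ n, a n ≠ 0 → 0 < b n) {r : ℝ} (hr : r ≤ 0) (hτ : 0 < τ.im)
    (hsum : Summable fun n => ‖a n‖ * Real.exp (-b n * τ.im) / b n) :
    EichI (fun w => ∑' n, a n * cexp (I * b n * w)) r τ
      = ∑' n, a n * EichI (fun w => cexp (I * b n * w)) r τ := by
  set F : ι → ℝ → ℂ := fun n t =>
    a n * (cexp (I * b n * eichlerPath τ t) * ker (eichlerPath τ t) τ r * I)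
  have hint : ∀ n, IntegrableOn (F n) (Set.Ioi 0) := by
    intro n
    rcases eq_or_ne (a n) 0 with han | han
    · simp [F, han]
    · exact (integrableOn_cexp_mul_ker_eichlerPath (hb n han) hτ hr).const_mul _
  have hbound : ∀ n, ∫ t in Set.Ioi 0, ‖F n t‖
      ≤ (2 * τ.im) ^ r * (‖a n‖ * Real.exp (-b n * τ.im) / b n) := by
    intro n
    rcases eq_or_ne (a n) 0 with han | han
    · simp [F, han]
    · simp only [F, norm_mul _ (_ * I)]
      rw [integral_const_mul]
      calc ‖a n‖ * ∫ t in Set.Ioi 0,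
            ‖cexp (I * b n * eichlerPath τ t) * ker (eichlerPath τ t) τ r * I‖
          ≤ ‖a n‖ * (Real.exp (-b n * τ.im) * (2 * τ.im) ^ r / b n) :=
            mul_le_mul_of_nonneg_left
              (setIntegral_norm_cexp_mul_ker_eichlerPath_le (hb n han) hτ hr) (norm_nonneg _)
        _ = _ := by ring
  have hsum' : Summable fun n => ∫ t in Set.Ioi 0, ‖F n t‖ :=
    (hsum.mul_left _).of_nonneg_of_le (fun n => integral_nonneg fun t => norm_nonneg _) hbound
  calc EichI (fun w => ∑' n, a n * cexp (I * b n * w)) r τ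
      = ∫ t in Set.Ioi 0, ∑' n, F n t := by
        rw [EichI_eq_setIntegral]
        refine integral_congr_ae (Eventually.of_forall fun t => ?_)
        simp only [F, ← tsum_mul_right, mul_assoc]
    _ = ∑' n, ∫ t in Set.Ioi 0, F n t :=
        (integral_tsum_of_summable_integral_norm hint hsum').symm
    _ = _ := by simp only [F, integral_const_mul, EichI_eq_setIntegral]

end EichlerPath

def fjpCoeff (p j : ℕ) (n : ℤ) : ℂ :=
  if n % (2 * (p : ℤ)) = (j : ℤ) % (2 * (p : ℤ)) then n / (2 * p) else 0

def fjpFreq (p : ℕ) (n : ℤ) : ℝ := π * n ^ 2 / (2 * p)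

lemma fjp_eq_tsum (p j : ℕ) (w : ℂ) :
    fjp p j w = ∑' n : ℤ, fjpCoeff p j n * cexp (I * fjpFreq p n * w) := by
  rw [fjp, ← tsum_mul_left]
  refine tsum_congr fun n => ?_
  unfold fjpCoeff fjpFreq
  split_ifs
  · push_cast
    rw [show 2 * π * I * w * n ^ 2 / (4 * p) = I * (π * n ^ 2 / (2 * p)) * w by ring]
    ring
  · simp

lemma fjpFreq_pos {p : ℕ} (hp : 0 < p) {n : ℤ} (hn : n ≠ 0) : 0 < fjpFreq p n := by
  unfold fjpFreq
  positivity

lemma ne_zero_of_fjpCoeff_ne_zero {p j : ℕ} {n : ℤ} (h : fjpCoeff p j n ≠ 0) : n ≠ 0 := by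
  rintro rfl
  simp [fjpCoeff] at h

lemma norm_fjpCoeff_div_fjpFreq_le {p : ℕ} (hp : 0 < p) (j : ℕ) (n : ℤ) :
    ‖fjpCoeff p j n‖ / fjpFreq p n ≤ π⁻¹ := by
  rcases eq_or_ne (fjpCoeff p j n) 0 with h | h
  · simp [h, Real.pi_pos.le]
  have hn := ne_zero_of_fjpCoeff_ne_zero h
  have h1 : (1 : ℝ) ≤ |(n : ℝ)| := by exact_mod_cast Int.one_le_abs hn
  have hcoeff : ‖fjpCoeff p j n‖ ≤ |(n : ℝ)| / (2 * p) := by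
    unfold fjpCoeff
    split_ifs
    · rw [norm_div, norm_mul, Complex.norm_intCast]
      simp
    · simp only [norm_zero]
      positivity
  calc ‖fjpCoeff p j n‖ / fjpFreq p n ≤ |(n : ℝ)| / (2 * p) / fjpFreq p n := by
        gcongr
        exact (fjpFreq_pos hp hn).le
    _ = π⁻¹ / |(n : ℝ)| := by
        unfold fjpFreq
        rw [← sq_abs]
        field_simp
    _ ≤ π⁻¹ := div_le_self (by positivity) h1

lemma summable_fjpCoeff {p : ℕ} (hp : 0 < p) (j : ℕ) {v : ℝ} (hv : 0 < v) :
    Summable fun n : ℤ => ‖fjpCoeff p j n‖ * Real.exp (-fjpFreq p n * v) / fjpFreq p n := by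
  have htheta : Summable fun n : ℤ => ‖jacobiTheta₂_term n 0 (I * (v / (2 * p) : ℝ))‖ :=
    ((summable_jacobiTheta₂_term_iff _ _).mpr (by
      simp only [mul_im, I_re, I_im, ofReal_re, ofReal_im, zero_mul, one_mul, zero_add]
      exact div_pos hv (by positivity))).norm
  refine (htheta.mul_left π⁻¹).of_nonneg_of_le (fun n => ?_) fun n => ?_
  · exact div_nonneg (by positivity) (by unfold fjpFreq; positivity)
  · have hexp : -π * n ^ 2 * (I * (v / (2 * p) : ℝ)).im - 2 * π * n * (0 : ℂ).im
        = -fjpFreq p n * v := by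
      simp only [mul_im, I_re, I_im, ofReal_re, ofReal_im, zero_im, fjpFreq]
      ring
    rw [norm_jacobiTheta₂_term, hexp, mul_div_right_comm]
    exact mul_le_mul_of_nonneg_right (norm_fjpCoeff_div_fjpFreq_le hp j n) (Real.exp_pos _).le

lemma sqrt_mul_div_mul_fjpFreq_rpow {p : ℕ} (hp : 0 < p) (n : ℤ) :
    √(2 * p) * (n / (2 * p)) * fjpFreq p n ^ (-(1 / 2) : ℝ) = n.sign / √π := by
  rcases eq_or_ne n 0 with rfl | hn
  · simp
  have hfreq : fjpFreq p n ^ (-(1 / 2) : ℝ) = √(2 * p) / (√π * |(n : ℝ)|) := by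
    rw [Real.rpow_neg (fjpFreq_pos hp hn).le, ← Real.sqrt_eq_rpow, fjpFreq,
      Real.sqrt_div' _ (by positivity), Real.sqrt_mul Real.pi_pos.le, Real.sqrt_sq_eq_abs,
      inv_div]
  have hsign : (n : ℝ) = n.sign * |(n : ℝ)| := by exact_mod_cast (Int.sign_mul_abs n).symm
  have hsqrt : √(2 * p : ℝ) ^ 2 = 2 * p := Real.sq_sqrt (by positivity)
  have habs : |(n : ℝ)| ≠ 0 := by simpa using hn
  rw [hfreq]
  nth_rewrite 1 [hsign]
  field_simp
  rw [hsqrt]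

lemma Fstar_summand_eq {p : ℕ} (hp : 0 < p) (j : ℕ) {τ : ℂ} (hτ : 0 < τ.im) (n : ℤ) :
    1 / ((√π : ℝ) : ℂ) * (if n % (2 * (p : ℤ)) = (j : ℤ) % (2 * (p : ℤ)) then
      (n.sign : ℂ) * ((incGamma (1 / 2) (π * (n : ℝ) ^ 2 * τ.im / p) : ℝ) : ℂ) *
        cexp (-(2 * (π : ℂ) * I * τ * (n : ℂ) ^ 2 / (4 * (p : ℂ)))) else 0)
    = -I * ((√(2 * p) : ℝ) : ℂ) * (fjpCoeff p j n *
        EichI (fun w => cexp (I * fjpFreq p n * w)) ((1 / 2 - 1 : ℝ) : ℂ) τ) := by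
  rcases eq_or_ne n 0 with rfl | hn
  · simp [fjpCoeff]
  have hp' : (p : ℂ) ≠ 0 := by exact_mod_cast hp.ne'
  have hgamma : 2 * fjpFreq p n * τ.im = π * n ^ 2 * τ.im / p := by
    unfold fjpFreq
    field_simp
  have hexp : I * fjpFreq p n * τ = 2 * π * I * τ * n ^ 2 / (4 * p) := by
    unfold fjpFreq
    push_cast
    field_simp
    ring
  have hscalar := congrArg ((↑) : ℝ → ℂ) (sqrt_mul_div_mul_fjpFreq_rpow hp n)
  push_cast at hscalar
  rw [EichI_cexp (fjpFreq_pos hp hn) hτ, hgamma, hexp, fjpCoeff]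
  split_ifs
  · push_cast
    set c := ((incGamma (1 / 2) (π * n ^ 2 * τ.im / p) : ℝ) : ℂ) *
      cexp (-(2 * π * I * τ * n ^ 2 / (4 * p)))
    linear_combination (-c) * hscalar +
      (c * √(2 * p) * (n / (2 * p)) * (fjpFreq p n ^ (-(1 / 2) : ℝ) : ℝ)) * I_sq
  · simp

theorem stmt1_general (p : ℕ) (hp : 2 ≤ p) (j : ℕ)
    (τ : ℂ) (hτ : 0 < τ.im) :
    Fstar p j τ = -I * ((Real.sqrt (2 * p) : ℝ) : ℂ) * EichI (fjp p j) (-(1/2)) τ := by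
  have hp0 : 0 < p := by omega
  have hEich : EichI (fjp p j) (-(1 / 2)) τ
      = ∑' n, fjpCoeff p j n *
          EichI (fun w => cexp (I * fjpFreq p n * w)) ((1 / 2 - 1 : ℝ) : ℂ) τ := by
    rw [funext (fjp_eq_tsum p j), show (-(1 / 2) : ℂ) = ((1 / 2 - 1 : ℝ) : ℂ) by norm_num]
    exact EichI_tsum_mul_cexp (fun n h => fjpFreq_pos hp0 (ne_zero_of_fjpCoeff_ne_zero h))
      (by norm_num) hτ (summable_fjpCoeff hp0 j hτ)
  rw [Fstar, hEich, ← tsum_mul_left, ← tsum_mul_left]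
  exact tsum_congr (Fstar_summand_eq hp0 j hτ)

/-- `F*_{j,p}(τ) = -i√(2p)·I_{f_{j,p}}(τ)`. -/
theorem stmt1 (p : ℕ) (hp : 2 ≤ p) (j : ℕ) (hj1 : 1 ≤ j) (hj2 : j ≤ p - 1)
    (τ : ℂ) (hτ : 0 < τ.im) :
    Fstar p j τ = -I * ((Real.sqrt (2 * p) : ℝ) : ℂ) * EichI (fjp p j) (-(1/2)) τ :=
  stmt1_general p hp j τ hτ

end QMF
end
end

section
/- Fix an integer p≥2. For all w=(w₁,w₂)∈ℍ² one has Σ_{α∈𝒮*} ε(α)·θ₁(α;w) = 0. -/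
noncomputable section

open Complex MeasureTheory Real Filter Topology

namespace QMF

private lemma aux_term (b : ℝ) (w₁ w₂ : ℂ) (m₂ : ℤ) (A A' : ℂ)
    (hA : A' = -A) :
    A' * nv b m₂ *
      Complex.exp (3 * (π : ℂ) * I / 2 * A' ^ 2 * w₁
        + (π : ℂ) * I / 2 * (nv b m₂) ^ 2 * w₂)
    = -(A * nv b m₂ *
      Complex.exp (3 * (π : ℂ) * I / 2 * A ^ 2 * w₁
        + (π : ℂ) * I / 2 * (nv b m₂) ^ 2 * w₂)) := by
  rw [hA, neg_sq]; ring

private lemma theta1_neg (w₁ w₂ : ℂ) (a₁ a₂ b : ℝ) (c : ℤ)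
    (h : ∀ m₁ m₂ : ℤ, 2 * nv a₁ (c - m₁ - m₂) + nv b m₂ = -(2 * nv a₂ m₁ + nv b m₂)) :
    theta1 (a₁, b) w₁ w₂ = - theta1 (a₂, b) w₁ w₂ := by
  rw [theta1, theta1, ← tsum_neg]
  rw [← Equiv.tsum_eq
    (⟨fun m => (c - m.1 - m.2, m.2), fun m => (c - m.1 - m.2, m.2),
      by rintro ⟨x, y⟩; simp; omega,
      by rintro ⟨x, y⟩; simp; omega⟩ : ℤ × ℤ ≃ ℤ × ℤ)]
  apply tsum_congr
  rintro ⟨m₁, m₂⟩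
  simp only [Equiv.coe_fn_mk]
  exact aux_term b w₁ w₂ m₂ _ _ (h m₁ m₂)

/-- the `ε`-weighted sum of `θ₁` over `𝒮*` vanishes. -/
theorem stmt7 (p : ℕ) (hp : 2 ≤ p) (w₁ w₂ : ℂ) (h₁ : 0 < w₁.im) (h₂ : 0 < w₂.im) :
    (-2) * theta1 (1 - 1/(p:ℝ), 2/(p:ℝ)) w₁ w₂
      + theta1 (0, 1 - 1/(p:ℝ)) w₁ w₂
      + theta1 (1/(p:ℝ), 1 - 1/(p:ℝ)) w₁ w₂ = 0 := by
  have h1 : theta1 (1 - 1/(p:ℝ), 2/(p:ℝ)) w₁ w₂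
      = - theta1 (1 - 1/(p:ℝ), 2/(p:ℝ)) w₁ w₂ := by
    apply theta1_neg w₁ w₂ _ _ _ (-2)
    intro m₁ m₂; simp only [nv]; push_cast; ring
  have h2 : theta1 (0, 1 - 1/(p:ℝ)) w₁ w₂
      = - theta1 (1/(p:ℝ), 1 - 1/(p:ℝ)) w₁ w₂ := by
    apply theta1_neg w₁ w₂ _ _ _ (-1)
    intro m₁ m₂; simp only [nv]; push_cast; ring
  linear_combination h2 - h1

end QMF
end
end

section
/- Fix an integer p≥2. For all w=(w₁,w₂)∈ℍ² one has Σ_{α∈𝒮*} ε(α)·θ₂(α;w) = (1/p²)·Σ_{δ∈{0,1}} Θ₁(2p, 1+δp, 2p; w₁/p)·Θ₁(6p, 3+3δp, 6p; w₂/p). -/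
noncomputable section

open Complex MeasureTheory Real Filter Topology

namespace QMF

/-!
Write `α = (c₁/p, c₂/p)`. For `n ∈ α + ℤ²` the integers `A = p(3n₁+2n₂)` and `B = pn₁` run
through the coset `B ≡ c₁ (mod p)`, `A - 3B ≡ 2c₂ (mod 2p)`, and the summand of `θ₂(α;w)` becomes
`p⁻² g₁(A) g₂(B)` with `g₁(m) = m e^{πi m² w₁/(2p²)}` and `g₂(m) = m e^{3πi m² w₂/(2p²)}`.
Since `g₂` is odd, `(A, B) ↦ (A, -B)` kills the sum over the coset of `(0, -1)` and maps the
coset of `(-1, 2)` onto that of `(1, -1)` reversing the sign of the sum, so the left-hand side is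
`3p⁻²` times the sum over the coset of `(1, -1)`. Splitting `B` modulo `2p`, that coset is the
disjoint union of the products `{A ≡ B ≡ 1 + δp (mod 2p)}`, `δ ∈ {0, 1}`, and on each product
the sum factors into the two Shimura theta functions.
-/

def thetaTerm (c : ℂ) (n : ℤ) : ℂ := n * cexp (π * I * n ^ 2 * c)

lemma thetaTerm_neg (c : ℂ) (n : ℤ) : thetaTerm c (-n) = -thetaTerm c n := by
  simp [thetaTerm]

lemma summable_norm_thetaTerm {c : ℂ} (hc : 0 < c.im) :
    Summable fun n : ℤ => ‖thetaTerm c n‖ := by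
  refine (summable_pow_mul_jacobiTheta₂_term_bound 0 hc 1).congr fun n => ?_
  rw [thetaTerm, norm_mul, Complex.norm_exp, Complex.norm_intCast,
    show (π : ℂ) * I * n ^ 2 * c = ((π * n ^ 2 : ℝ) : ℂ) * (I * c) by push_cast; ring,
    Complex.re_ofReal_mul, Complex.I_mul_re, Int.cast_abs]
  ring_nf

lemma summable_norm_thetaTerm_div {p : ℕ} (hp : p ≠ 0) {w : ℂ} (hw : 0 < w.im) :
    Summable fun n => ‖thetaTerm (w / (2 * p ^ 2)) n‖ := by
  refine summable_norm_thetaTerm ?_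
  rw [show (2 * p ^ 2 : ℂ) = ((2 * p ^ 2 : ℕ) : ℂ) by push_cast; ring, Complex.div_natCast_im]
  positivity

lemma tsum_preimage_map_neg_of_odd {α G : Type*} [AddGroup G] {F : α × G → ℂ}
    (hF : ∀ a b, F (a, -b) = -F (a, b)) (s : Set (α × G)) :
    ∑' x : Prod.map id Neg.neg ⁻¹' s, F x = -∑' x : s, F x := by
  have hν : Function.Involutive (Prod.map id Neg.neg : α × G → α × G) :=
    Function.Involutive.prodMap (fun _ => rfl) neg_involutive
  rw [← hν.image_eq_preimage_symm, tsum_image F hν.injective.injOn, ← tsum_neg]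
  exact tsum_congr fun x => hF _ _

lemma tsum_prod_set_mul {α β : Type*} {f : α → ℂ} {g : β → ℂ}
    (hf : Summable fun a => ‖f a‖) (hg : Summable fun b => ‖g b‖) (s : Set α) (t : Set β) :
    ∑' x : s ×ˢ t, f (x : α × β).1 * g (x : α × β).2 = (∑' a : s, f a) * ∑' b : t, g b := by
  rw [tsum_mul_tsum_of_summable_norm (f := fun a : s => f a) (g := fun b : t => g b)
    (hf.subtype s) (hg.subtype t), ← (Equiv.Set.prod s t).tsum_eq]
  rfl

def theta2Coset (n c₁ c₂ : ℤ) : Set (ℤ × ℤ) :=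
  {x | x.2 ≡ c₁ [ZMOD n] ∧ x.1 - 3 * x.2 ≡ 2 * c₂ [ZMOD 2 * n]}

lemma theta2Coset_eq_range (n c₁ c₂ : ℤ) :
    theta2Coset n c₁ c₂ =
      Set.range fun m : ℤ × ℤ => (3 * c₁ + 2 * c₂ + n * (3 * m.1 + 2 * m.2), c₁ + n * m.1) := by
  ext ⟨A, B⟩
  simp only [theta2Coset, Set.mem_ofPred_eq, Set.mem_range, Prod.mk.injEq, Int.modEq_iff_dvd,
    Prod.exists]
  constructor
  · rintro ⟨⟨u, hu⟩, ⟨v, hv⟩⟩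
    exact ⟨-u, -v, by linear_combination 3 * hu + hv, by linear_combination hu⟩
  · rintro ⟨a, b, rfl, rfl⟩
    exact ⟨⟨-a, by ring⟩, ⟨-b, by ring⟩⟩

lemma theta2Coset_congr {n c₁ c₂ c₁' c₂' : ℤ} (h₁ : c₁ ≡ c₁' [ZMOD n]) (h₂ : c₂ ≡ c₂' [ZMOD n]) :
    theta2Coset n c₁ c₂ = theta2Coset n c₁' c₂' := by
  have h₂' : 2 * c₂ ≡ 2 * c₂' [ZMOD 2 * n] := h₂.mul_left'
  ext x
  simp only [theta2Coset, Set.mem_ofPred_eq, Int.ModEq] at h₁ h₂' ⊢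
  rw [h₁, h₂']

lemma preimage_map_neg_theta2Coset (n c₁ c₂ : ℤ) :
    Prod.map id Neg.neg ⁻¹' theta2Coset n c₁ c₂ = theta2Coset n (-c₁) (c₂ + 3 * c₁) := by
  ext ⟨A, B⟩
  simp only [theta2Coset, Set.mem_preimage, Prod.map, id, Set.mem_ofPred_eq, Int.modEq_iff_dvd]
  constructor
  · rintro ⟨⟨u, hu⟩, ⟨v, hv⟩⟩
    exact ⟨⟨-u, by linear_combination -hu⟩, ⟨v + 3 * u, by linear_combination hv + 6 * hu⟩⟩
  · rintro ⟨⟨u, hu⟩, ⟨v, hv⟩⟩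
    exact ⟨⟨-u, by linear_combination -hu⟩, ⟨v + 3 * u, by linear_combination hv + 6 * hu⟩⟩

lemma theta2Coset_eq_union (n c₁ c₂ : ℤ) :
    theta2Coset n c₁ c₂ =
      {A | A ≡ 3 * c₁ + 2 * c₂ [ZMOD 2 * n]} ×ˢ {B | B ≡ c₁ [ZMOD 2 * n]} ∪
        {A | A ≡ 3 * c₁ + 2 * c₂ + n [ZMOD 2 * n]} ×ˢ {B | B ≡ c₁ + n [ZMOD 2 * n]} := by
  ext ⟨A, B⟩
  simp only [theta2Coset, Set.mem_union, Set.mem_prod, Set.mem_ofPred_eq, Int.modEq_iff_dvd]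
  constructor
  · rintro ⟨⟨u, hu⟩, ⟨v, hv⟩⟩
    obtain ⟨k, rfl | rfl⟩ := Int.even_or_odd' u
    · exact .inl ⟨⟨3 * k + v, by linear_combination 3 * hu + hv⟩, ⟨k, by linear_combination hu⟩⟩
    · exact .inr ⟨⟨3 * k + 2 + v, by linear_combination 3 * hu + hv⟩,
        ⟨k + 1, by linear_combination hu⟩⟩
  · rintro (⟨⟨a, ha⟩, ⟨b, hb⟩⟩ | ⟨⟨a, ha⟩, ⟨b, hb⟩⟩)
    · exact ⟨⟨2 * b, by linear_combination hb⟩, ⟨a - 3 * b, by linear_combination ha - 3 * hb⟩⟩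
    · exact ⟨⟨2 * b - 1, by linear_combination hb⟩,
        ⟨a + 1 - 3 * b, by linear_combination ha - 3 * hb⟩⟩

lemma not_modEq_add_self {n : ℤ} (hn : n ≠ 0) (a : ℤ) : ¬a ≡ a + n [ZMOD 2 * n] := by
  intro h
  obtain ⟨k, hk⟩ := Int.modEq_iff_dvd.mp h
  have : n * (1 - 2 * k) = 0 := by linear_combination hk
  rcases mul_eq_zero.mp this with h0 | h1
  · exact hn h0
  · omega

section Theta2Sum

variable (p : ℕ) (w₁ w₂ : ℂ)

def theta2Sum (s : Set (ℤ × ℤ)) : ℂ :=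
  ∑' x : s, thetaTerm (w₁ / (2 * p ^ 2)) (x : ℤ × ℤ).1 *
    thetaTerm (3 * w₂ / (2 * p ^ 2)) (x : ℤ × ℤ).2

def progressionProd (a b : ℤ) : ℂ :=
  (∑' m : {m : ℤ | m ≡ a [ZMOD 2 * p]}, thetaTerm (w₁ / (2 * p ^ 2)) m) *
    ∑' m : {m : ℤ | m ≡ b [ZMOD 2 * p]}, thetaTerm (3 * w₂ / (2 * p ^ 2)) m

variable {p}

lemma theta2_eq_theta2Sum (hp : p ≠ 0) (c₁ c₂ : ℤ) :
    theta2 ((c₁ : ℝ) / p, (c₂ : ℝ) / p) w₁ w₂ =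
      1 / (p : ℂ) ^ 2 * theta2Sum p w₁ w₂ (theta2Coset p c₁ c₂) := by
  have hpZ : (p : ℤ) ≠ 0 := by exact_mod_cast hp
  have hpC : (p : ℂ) ≠ 0 := by exact_mod_cast hp
  have hinj : Function.Injective fun m : ℤ × ℤ =>
      (3 * c₁ + 2 * c₂ + (p : ℤ) * (3 * m.1 + 2 * m.2), c₁ + (p : ℤ) * m.1) := by
    rintro ⟨a, b⟩ ⟨a', b'⟩ h
    simp only [Prod.mk.injEq] at h ⊢
    obtain rfl : a = a' := mul_left_cancel₀ hpZ (by linarith [h.2])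
    have hb : (p : ℤ) * (2 * b) = p * (2 * b') := by linarith [h.1]
    exact ⟨rfl, by linarith [mul_left_cancel₀ hpZ hb]⟩
  rw [theta2Sum, theta2Coset_eq_range, tsum_range (fun x : ℤ × ℤ =>
    thetaTerm (w₁ / (2 * p ^ 2)) x.1 * thetaTerm (3 * w₂ / (2 * p ^ 2)) x.2) hinj, theta2,
    ← tsum_mul_left]
  refine tsum_congr fun m => ?_
  simp only [nv, thetaTerm]
  push_cast
  rw [mul_mul_mul_comm, ← Complex.exp_add, ← mul_assoc]
  congr 1
  · field_simp
    ring
  · congr 1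
    field_simp
    ring

lemma theta2Sum_theta2Coset_neg (n c₁ c₂ : ℤ) :
    theta2Sum p w₁ w₂ (theta2Coset n (-c₁) (c₂ + 3 * c₁)) =
      -theta2Sum p w₁ w₂ (theta2Coset n c₁ c₂) := by
  rw [← preimage_map_neg_theta2Coset]
  exact tsum_preimage_map_neg_of_odd (F := fun x : ℤ × ℤ =>
    thetaTerm (w₁ / (2 * p ^ 2)) x.1 * thetaTerm (3 * w₂ / (2 * p ^ 2)) x.2)
    (fun a b => by rw [thetaTerm_neg, mul_neg]) _

lemma theta2Sum_theta2Coset_zero (n c : ℤ) : theta2Sum p w₁ w₂ (theta2Coset n 0 c) = 0 := by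
  have h := theta2Sum_theta2Coset_neg (p := p) w₁ w₂ n 0 c
  rw [neg_zero, mul_zero, add_zero] at h
  exact self_eq_neg.mp h

lemma theta2Sum_theta2Coset_eq_add (hp : p ≠ 0) (h₁ : 0 < w₁.im) (h₂ : 0 < w₂.im) (c₁ c₂ : ℤ) :
    theta2Sum p w₁ w₂ (theta2Coset p c₁ c₂) =
      progressionProd p w₁ w₂ (3 * c₁ + 2 * c₂) c₁ +
        progressionProd p w₁ w₂ (3 * c₁ + 2 * c₂ + p) (c₁ + p) := by
  have hg₁ := summable_norm_thetaTerm_div hp h₁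
  have hg₂ := summable_norm_thetaTerm_div hp (w := 3 * w₂) (by simpa using h₂)
  have hF := summable_mul_of_summable_norm hg₁ hg₂
  rw [theta2Sum, theta2Coset_eq_union, Summable.tsum_union_disjoint
    (Set.disjoint_prod.mpr <| .inr <| Set.disjoint_left.mpr fun b hb hb' =>
      not_modEq_add_self (by exact_mod_cast hp) c₁ (hb.symm.trans hb'))
    (hF.subtype _) (hF.subtype _), tsum_prod_set_mul hg₁ hg₂, tsum_prod_set_mul hg₁ hg₂,
    progressionProd, progressionProd]

lemma ShTheta_eq_tsum_modEq (ν A : ℕ) (h : ℤ) (N : ℕ) (τ : ℂ) :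
    ShTheta ν A h N τ = ∑' m : {m : ℤ | m ≡ h [ZMOD N]},
      (m : ℂ) ^ ν * cexp (π * I * τ * A * (m : ℂ) ^ 2 / (N : ℂ) ^ 2) := by
  rw [ShTheta,
    tsum_subtype _ fun m : ℤ => (m : ℂ) ^ ν * cexp (π * I * τ * A * (m : ℂ) ^ 2 / N ^ 2)]
  refine tsum_congr fun m => ?_
  simp only [Set.indicator, Set.mem_ofPred_eq, Int.ModEq]
  congr

lemma ShTheta_one_eq_tsum_thetaTerm (hp : p ≠ 0) (h : ℤ) (w : ℂ) :
    ShTheta 1 (2 * p) h (2 * p) (w / p) =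
      ∑' m : {m : ℤ | m ≡ h [ZMOD 2 * p]}, thetaTerm (w / (2 * p ^ 2)) m := by
  have hpC : (p : ℂ) ≠ 0 := by exact_mod_cast hp
  rw [ShTheta_eq_tsum_modEq]
  push_cast
  refine tsum_congr fun m => ?_
  rw [thetaTerm, pow_one]
  congr 2
  field_simp

lemma ShTheta_one_mul_three_eq_tsum_thetaTerm (hp : p ≠ 0) (h : ℤ) (w : ℂ) :
    ShTheta 1 (6 * p) (3 * h) (6 * p) (w / p) =
      3 * ∑' m : {m : ℤ | m ≡ h [ZMOD 2 * p]}, thetaTerm (3 * w / (2 * p ^ 2)) m := by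
  have hpC : (p : ℂ) ≠ 0 := by exact_mod_cast hp
  have himage : {m : ℤ | m ≡ 3 * h [ZMOD 6 * p]} = (3 * ·) '' {m : ℤ | m ≡ h [ZMOD 2 * p]} := by
    ext m
    simp only [Set.mem_ofPred_eq, Set.mem_image, Int.modEq_iff_dvd]
    constructor
    · rintro ⟨k, hk⟩
      exact ⟨h - 2 * p * k, ⟨k, by ring⟩, by linear_combination hk⟩
    · rintro ⟨b, ⟨k, hk⟩, rfl⟩
      exact ⟨k, by linear_combination 3 * hk⟩
  have hinj : Function.Injective (3 * · : ℤ → ℤ) := mul_right_injective₀ three_ne_zero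
  rw [ShTheta_eq_tsum_modEq]
  push_cast
  rw [himage, tsum_image (fun m : ℤ => (m : ℂ) ^ 1 *
    cexp (π * I * (w / p) * (6 * (p : ℂ)) * (m : ℂ) ^ 2 / (6 * (p : ℂ)) ^ 2)) hinj.injOn,
    ← tsum_mul_left]
  refine tsum_congr fun m => ?_
  simp only [thetaTerm]
  push_cast
  rw [pow_one]
  field_simp
  ring_nf

lemma ShTheta_mul_ShTheta (hp : p ≠ 0) (h : ℤ) :
    ShTheta 1 (2 * p) h (2 * p) (w₁ / p) * ShTheta 1 (6 * p) (3 * h) (6 * p) (w₂ / p) =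
      3 * progressionProd p w₁ w₂ h h := by
  rw [ShTheta_one_eq_tsum_thetaTerm hp, ShTheta_one_mul_three_eq_tsum_thetaTerm hp,
    progressionProd]
  ring

end Theta2Sum

/-- the `ε`-weighted sum of `θ₂` over `𝒮*` as a product of Shimura thetas. -/
theorem stmt8 (p : ℕ) (hp : 2 ≤ p) (w₁ w₂ : ℂ) (h₁ : 0 < w₁.im) (h₂ : 0 < w₂.im) :
    (-2) * theta2 (1 - 1/(p:ℝ), 2/(p:ℝ)) w₁ w₂
      + theta2 (0, 1 - 1/(p:ℝ)) w₁ w₂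
      + theta2 (1/(p:ℝ), 1 - 1/(p:ℝ)) w₁ w₂
      = (1/(p:ℂ)^2) * ∑ δ ∈ Finset.range 2,
          ShTheta 1 (2*p) (1 + (δ:ℤ)*p) (2*p) (w₁/p) *
          ShTheta 1 (6*p) (3 + 3*(δ:ℤ)*p) (6*p) (w₂/p) := by
  have hp0 : p ≠ 0 := by omega
  have hp_sub_one : (p - 1 : ℤ) ≡ -1 [ZMOD p] := Int.modEq_iff_dvd.mpr ⟨-1, by ring⟩
  have hsub : (1 - 1 / p : ℝ) = ((p - 1 : ℤ) : ℝ) / p := by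
    push_cast
    field_simp
  have hα₁ : theta2Coset p (p - 1) 2 = theta2Coset p (-1) (-1 + 3 * 1) :=
    theta2Coset_congr hp_sub_one (by norm_num)
  have hα₃ : theta2Coset p 1 (p - 1) = theta2Coset p 1 (-1) :=
    theta2Coset_congr (Int.ModEq.refl 1) hp_sub_one
  rw [hsub, show (2 / p : ℝ) = ((2 : ℤ) : ℝ) / p by simp, show (0 : ℝ) = ((0 : ℤ) : ℝ) / p by simp,
    show (1 / p : ℝ) = ((1 : ℤ) : ℝ) / p by simp, theta2_eq_theta2Sum _ _ hp0,
    theta2_eq_theta2Sum _ _ hp0, theta2_eq_theta2Sum _ _ hp0, hα₁, theta2Sum_theta2Coset_neg,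
    theta2Sum_theta2Coset_zero, hα₃, theta2Sum_theta2Coset_eq_add _ _ hp0 h₁ h₂]
  simp_rw [show ∀ δ : ℕ, (3 + 3 * δ * p : ℤ) = 3 * (1 + δ * p) from fun δ => by ring,
    ShTheta_mul_ShTheta _ _ hp0]
  simp only [Finset.sum_range_succ, Finset.sum_range_zero, Nat.cast_zero, Nat.cast_one, zero_mul,
    one_mul, add_zero, show (3 * 1 + 2 * -1 : ℤ) = 1 by norm_num]
  ring

end QMF
end
end
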